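/- arXiv:2012.14166 — 2 statements merged into one kernel-verified Lean document; each statement's English description precedes it below -/
import Mathlib

section
/- Let G be a solvable subgroup of AΓL(1, p^d) acting on the affine line over GF(p^d). Then the 3-closure of G is solvable. In particular, AΓL(1, p^d) itself is 3-closed, given that its point stabilizer ΓL(1, p^d) is 2-closed. -/
/-!
If `g` lies in the 3-closure of a group `H` with point stabilizer `H₀ = H_ω`, choose `h ∈ H`
with `h ω = g ω`; for every pair `(x, y)` the triple `(ω, x, y)` shows that `h⁻¹ g` agrees on
`(x, y)` with an element of `H₀`, so `h⁻¹ g` lies in the 2-closure of `H₀`. Hence a group whose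
point stabilizer is 2-closed is 3-closed. The stabilizer of `0` in `AΓL(1, q)` is `ΓL(1, q)`, so
`AΓL(1, q)` is 3-closed, and the 3-closure of any `G ≤ AΓL(1, q)` lies in `AΓL(1, q)`, which is
solvable: the translations are abelian, `AGL(1, q)` maps onto `GF(q)ˣ` with the translations
as kernel, and `AΓL(1, q)` maps onto the cyclic group `Aut GF(q)` with kernel `AGL(1, q)`.
-/

/-- Two subgroups of `Perm Ω` have the same orbits on `Ω^m` under the
componentwise action (`m`-equivalence). -/
def SameOrbits {Ω : Type*} (m : ℕ) (G H : Subgroup (Equiv.Perm Ω)) : Prop :=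
  ∀ α β : Fin m → Ω,
    (∃ g ∈ G, ∀ i, g (α i) = β i) ↔ (∃ h ∈ H, ∀ i, h (α i) = β i)

/-- The `m`-closure of `G`: the largest subgroup of `Perm Ω` having the same
orbits as `G` on `Ω^m`. -/
def mClosure {Ω : Type*} (m : ℕ) (G : Subgroup (Equiv.Perm Ω)) :
    Subgroup (Equiv.Perm Ω) :=
  sSup {H | SameOrbits m G H}

/-- `f` is an element of `AΓL(1, q)` on the finite field `F = GF(q)`:
`f x = a * σ(x) + b` with `a ≠ 0` and `σ` a field automorphism. -/
def IsAGammaL1 {F : Type*} [Field F] (f : Equiv.Perm F) : Prop :=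
  ∃ (a b : F) (σ : F ≃+* F), a ≠ 0 ∧ ∀ x, f x = a * σ x + b

/-- `f` is an element of `ΓL(1, q)`: `f x = a * σ(x)` with `a ≠ 0`. -/
def IsGammaL1 {F : Type*} [Field F] (f : Equiv.Perm F) : Prop :=
  ∃ (a : F) (σ : F ≃+* F), a ≠ 0 ∧ ∀ x, f x = a * σ x

open Equiv MulAction

section Closure

variable {Ω : Type*}

def tupleClosure (m : ℕ) (G : Subgroup (Perm Ω)) : Subgroup (Perm Ω) where
  carrier := {g | ∀ α : Fin m → Ω, ∃ h ∈ G, ∀ i, h (α i) = g (α i)}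
  one_mem' _ := ⟨1, one_mem G, fun _ => rfl⟩
  mul_mem' {a b} ha hb α := by
    obtain ⟨hb', hbG, hbe⟩ := hb α
    obtain ⟨ha', haG, hae⟩ := ha fun i => b (α i)
    exact ⟨ha' * hb', mul_mem haG hbG, fun i => by simp only [Perm.mul_apply, hbe, hae]⟩
  inv_mem' {a} ha α := by
    obtain ⟨h, hG, he⟩ := ha fun i => a⁻¹ (α i)
    refine ⟨h⁻¹, inv_mem hG, fun i => ?_⟩
    rw [Perm.inv_eq_iff_eq, he]
    simp

theorem sameOrbits_tupleClosure (m : ℕ) (G : Subgroup (Perm Ω)) :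
    SameOrbits m G (tupleClosure m G) := by
  intro α β
  constructor
  · rintro ⟨g, hg, he⟩
    exact ⟨g, fun _ => ⟨g, hg, fun _ => rfl⟩, he⟩
  · rintro ⟨h, hP, he⟩
    obtain ⟨g, hg, he'⟩ := hP α
    exact ⟨g, hg, fun i => (he' i).trans (he i)⟩

theorem mClosure_eq_tupleClosure (m : ℕ) (G : Subgroup (Perm Ω)) :
    mClosure m G = tupleClosure m G :=
  le_antisymm (sSup_le fun _ hH g hg α => (hH α fun i => g (α i)).mpr ⟨g, hg, fun _ => rfl⟩)
    (le_sSup (sameOrbits_tupleClosure m G))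

theorem mem_mClosure {m : ℕ} {G : Subgroup (Perm Ω)} {g : Perm Ω} :
    g ∈ mClosure m G ↔ ∀ α : Fin m → Ω, ∃ h ∈ G, ∀ i, h (α i) = g (α i) := by
  rw [mClosure_eq_tupleClosure]
  rfl

theorem le_mClosure (m : ℕ) (G : Subgroup (Perm Ω)) : G ≤ mClosure m G :=
  fun g hg => mem_mClosure.mpr fun _ => ⟨g, hg, fun _ => rfl⟩

theorem mClosure_mono {m : ℕ} {G G' : Subgroup (Perm Ω)} (h : G ≤ G') :
    mClosure m G ≤ mClosure m G' := by
  simp only [SetLike.le_def, mem_mClosure]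
  intro g hg α
  obtain ⟨k, hk, he⟩ := hg α
  exact ⟨k, h hk, he⟩

theorem mClosure_succ_eq_self {m : ℕ} {H : Subgroup (Perm Ω)} (ω : Ω)
    (hH : mClosure m (H ⊓ stabilizer (Perm Ω) ω) = H ⊓ stabilizer (Perm Ω) ω) :
    mClosure (m + 1) H = H := by
  refine le_antisymm (fun g hg => ?_) (le_mClosure _ H)
  rw [mem_mClosure] at hg
  obtain ⟨h, hhH, hhg⟩ := hg fun _ => ω
  have hcorr : h⁻¹ * g ∈ mClosure m (H ⊓ stabilizer (Perm Ω) ω) := by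
    refine mem_mClosure.mpr fun β => ?_
    obtain ⟨k, hkH, hkg⟩ := hg (Fin.cons ω β)
    refine ⟨h⁻¹ * k, Subgroup.mem_inf.mpr ⟨mul_mem (inv_mem hhH) hkH, ?_⟩, fun i => ?_⟩
    · rw [mem_stabilizer_iff, Perm.smul_def, Perm.mul_apply, Perm.inv_eq_iff_eq, hhg 0]
      simpa using hkg 0
    · simpa using congrArg (⇑h⁻¹) (hkg i.succ)
  rw [hH] at hcorr
  simpa using mul_mem hhH hcorr.1

end Closure

section SemilinearGroups

variable {F : Type*} [Field F]

theorem semilinear_mul_apply {f g : Perm F} {a b a' b' : F} {σ σ' : RingAut F}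
    (hf : ∀ x, f x = a * σ x + b) (hg : ∀ x, g x = a' * σ' x + b') (x : F) :
    (f * g) x = a * σ a' * (σ * σ') x + (a * σ b' + b) := by
  rw [Perm.mul_apply, hg, hf, RingAut.mul_apply]
  simp only [map_add, map_mul]
  ring

theorem semilinear_inv_apply {f : Perm F} {a b : F} {σ : RingAut F} (ha : a ≠ 0)
    (hf : ∀ x, f x = a * σ x + b) (x : F) :
    f⁻¹ x = σ⁻¹ a⁻¹ * σ⁻¹ x + -σ⁻¹ (a⁻¹ * b) := by
  rw [Perm.inv_eq_iff_eq, hf]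
  simp only [map_add, map_mul, map_neg, RingAut.inv_apply, RingEquiv.apply_symm_apply]
  field_simp
  ring

theorem ringEquiv_eq_of_semilinear_eq {a a' b b' : F} {σ σ' : RingAut F} (ha : a ≠ 0)
    (h : ∀ x, a * σ x + b = a' * σ' x + b') : σ = σ' := by
  have hb : b = b' := by simpa using h 0
  have ha' : a = a' := by simpa [hb] using h 1
  exact RingEquiv.ext fun x => mul_left_cancel₀ ha (by simpa [hb, ha'] using h x)

variable (F)

def aGammaL : Subgroup (Perm F) where
  carrier := {f | IsAGammaL1 f}
  one_mem' := ⟨1, 0, 1, one_ne_zero, fun x => by simp⟩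
  mul_mem' := by
    rintro f g ⟨a, b, σ, ha, hf⟩ ⟨a', b', σ', ha', hg⟩
    exact ⟨_, _, σ * σ', by simp [ha, ha'], semilinear_mul_apply hf hg⟩
  inv_mem' := by
    rintro f ⟨a, b, σ, ha, hf⟩
    exact ⟨_, _, σ⁻¹, by simp [ha], semilinear_inv_apply ha hf⟩

def affineGroup : Subgroup (Perm F) where
  carrier := {f | ∃ a b : F, a ≠ 0 ∧ ∀ x, f x = a * x + b}
  one_mem' := ⟨1, 0, one_ne_zero, fun x => by simp⟩
  mul_mem' := by
    rintro f g ⟨a, b, ha, hf⟩ ⟨a', b', ha', hg⟩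
    exact ⟨a * a', a * b' + b, mul_ne_zero ha ha', fun x => by
      rw [Perm.mul_apply, hg, hf]; ring⟩
  inv_mem' := by
    rintro f ⟨a, b, ha, hf⟩
    refine ⟨a⁻¹, -(a⁻¹ * b), inv_ne_zero ha, fun x => ?_⟩
    rw [Perm.inv_eq_iff_eq, hf]
    field_simp
    ring

theorem affineGroup_le_aGammaL : affineGroup F ≤ aGammaL F := by
  rintro f ⟨a, b, ha, hf⟩
  exact ⟨a, b, 1, ha, hf⟩

theorem mem_aGammaL_inf_stabilizer_zero {f : Perm F} :
    f ∈ aGammaL F ⊓ stabilizer (Perm F) (0 : F) ↔ IsGammaL1 f := by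
  rw [Subgroup.mem_inf, mem_stabilizer_iff, Perm.smul_def]
  constructor
  · rintro ⟨⟨a, b, σ, ha, hf⟩, h0⟩
    have hb : b = 0 := by simpa [h0] using (hf 0).symm
    exact ⟨a, σ, ha, fun x => by simpa [hb] using hf x⟩
  · rintro ⟨a, σ, ha, hf⟩
    exact ⟨⟨a, 0, σ, ha, fun x => by simpa using hf x⟩, by simpa using hf 0⟩

end SemilinearGroups

section Solvable

variable {F : Type*} [Field F]

theorem IsAGammaL1.choose_ringEquiv_eq {f : Perm F} (hf : IsAGammaL1 f) {a b : F}
    {σ : RingAut F} (h : ∀ x, f x = a * σ x + b) : hf.choose_spec.choose_spec.choose = σ := by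
  obtain ⟨ha', hf'⟩ := hf.choose_spec.choose_spec.choose_spec
  exact ringEquiv_eq_of_semilinear_eq ha' fun x => (hf' x).symm.trans (h x)

noncomputable def semilinearPart : aGammaL F →* RingAut F where
  toFun f := (show IsAGammaL1 (f : Perm F) from f.2).choose_spec.choose_spec.choose
  map_one' := IsAGammaL1.choose_ringEquiv_eq _ (a := 1) (b := 0) fun x => by simp
  map_mul' f g := by
    obtain ⟨a, b, σ, -, hf⟩ := f.2
    obtain ⟨a', b', σ', -, hg⟩ := g.2
    simp only [IsAGammaL1.choose_ringEquiv_eq _ hf, IsAGammaL1.choose_ringEquiv_eq _ hg]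
    exact IsAGammaL1.choose_ringEquiv_eq _ (semilinear_mul_apply hf hg)

theorem semilinearPart_eq (f : aGammaL F) {a b : F} {σ : RingAut F}
    (h : ∀ x, (f : Perm F) x = a * σ x + b) : semilinearPart f = σ :=
  IsAGammaL1.choose_ringEquiv_eq f.2 h

def linearPart : affineGroup F →* Fˣ where
  toFun f := Units.mk0 ((f : Perm F) 1 - (f : Perm F) 0) <| by
    obtain ⟨a, b, ha, hf⟩ := f.2
    simpa [hf] using ha
  map_one' := Units.ext (by simp)
  map_mul' f g := by
    obtain ⟨a, b, -, hf⟩ := f.2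
    obtain ⟨a', b', -, hg⟩ := g.2
    ext
    simp only [Subgroup.coe_mul, Perm.mul_apply, Units.val_mk0, Units.val_mul, hf, hg]
    ring

def translation : Multiplicative F →* affineGroup F where
  toFun b := ⟨Equiv.addLeft b.toAdd, 1, b.toAdd, one_ne_zero, fun x => by simp [add_comm]⟩
  map_one' := Subtype.ext <| Equiv.ext fun x => zero_add x
  map_mul' b c := Subtype.ext <| Equiv.ext fun x => add_assoc _ _ x

theorem isSolvable_affineGroup : Group.IsSolvable (affineGroup F) := by
  refine Group.isSolvable_of_ker_le_range translation linearPart fun f hf => ?_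
  obtain ⟨a, b, -, hfab⟩ := f.2
  have ha : a = 1 := by simpa [linearPart, Units.ext_iff, hfab] using hf
  exact ⟨Multiplicative.ofAdd b, Subtype.ext <| Equiv.ext fun x => by
    simp [translation, hfab, ha, add_comm]⟩

/-- Every ring automorphism fixes the prime field, so `RingAut F` embeds into the cyclic
group `Gal(F/𝔽ₚ)`. -/
theorem isSolvable_ringAut [Finite F] : Group.IsSolvable (RingAut F) := by
  obtain ⟨p, _⟩ := CharP.exists F
  have : Fact p.Prime := ⟨CharP.char_is_prime F p⟩
  let := ZMod.algebra F p
  let toGal : RingAut F →* Gal(F/ZMod p) :=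
    { toFun σ := AlgEquiv.ofRingEquiv (f := σ) fun r => DFunLike.congr_fun
        (Subsingleton.elim ((σ : F →+* F).comp (algebraMap (ZMod p) F)) (algebraMap _ _)) r
      map_one' := rfl
      map_mul' _ _ := rfl }
  have : Group.IsSolvable Gal(F/ZMod p) := Group.isSolvable_of_comm IsCyclic.commGroup.mul_comm
  exact Group.isSolvable_of_isSolvable_injective (f := toGal) fun σ τ h =>
    RingEquiv.ext (AlgEquiv.ext_iff.mp h)

theorem isSolvable_aGammaL [Finite F] : Group.IsSolvable (aGammaL F) := by
  have := isSolvable_affineGroup (F := F)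
  have := isSolvable_ringAut (F := F)
  refine Group.isSolvable_of_ker_le_range (Subgroup.inclusion (affineGroup_le_aGammaL F))
    semilinearPart fun f hf => ?_
  obtain ⟨a, b, σ, ha, hfab⟩ := f.2
  obtain rfl : σ = 1 := (semilinearPart_eq f hfab).symm.trans hf
  exact ⟨⟨f, a, b, ha, hfab⟩, rfl⟩

end Solvable

theorem stmt10 {F : Type*} [Field F] [Fintype F]
    -- the point stabilizer `ΓL(1, q)` of `0` is 2-closed
    (hGammaL : ∀ K : Subgroup (Equiv.Perm F),
      (∀ f, f ∈ K ↔ IsGammaL1 f) → mClosure 2 K = K) :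
    -- the 3-closure of any solvable subgroup of `AΓL(1, q)` is solvable
    (∀ G : Subgroup (Equiv.Perm F), IsSolvable G →
      (∀ f ∈ G, IsAGammaL1 f) → IsSolvable (mClosure 3 G)) ∧
    -- in particular, `AΓL(1, q)` itself is 3-closed
    ∀ H : Subgroup (Equiv.Perm F),
      (∀ f, f ∈ H ↔ IsAGammaL1 f) → mClosure 3 H = H := by
  have hclosed : mClosure 3 (aGammaL F) = aGammaL F :=
    mClosure_succ_eq_self 0 (hGammaL _ fun _ => mem_aGammaL_inf_stabilizer_zero F)
  refine ⟨fun G _ hG => ?_, fun H hH => ?_⟩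
  · have hle : mClosure 3 G ≤ aGammaL F := hclosed ▸ mClosure_mono hG
    have := isSolvable_aGammaL (F := F)
    exact Group.isSolvable_of_isSolvable_injective (Subgroup.inclusion_injective hle)
  · obtain rfl : H = aGammaL F := Subgroup.ext hH
    exact hclosed
end

section
/- The 2-closure of the imprimitive wreath product of two permutation groups equals the imprimitive wreath product of their 2-closures: for K ≤ Sym(Γ), L ≤ Sym(Δ), and any m ≥ 2, (K wr L)^(m) = K^(m) wr L^(m), where K wr L acts imprimitively on Γ × Δ. -/
/-!
A permutation lies in the `m`-closure of `G` iff on every `m`-tuple it agrees with some element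
of `G`. For `m ≥ 2` an element `f` of `(K wr L)^(m)` therefore agrees on every pair of points with
a wreath permutation, so it maps fibres `Γ × {δ}` onto fibres and has the form
`(γ, δ) ↦ (k δ γ, l δ)`; testing `f` on tuples inside one fibre shows `k δ ∈ K^(m)`, and on tuples
along a transversal `{γ₀} × Δ` shows `l ∈ L^(m)`. Conversely, for `(k, l) ∈ K^(m) wr L^(m)` and an
`m`-tuple of points, one `l' ∈ L` matches `l` on the second coordinates and, for each `δ`, one
`k' δ ∈ K` matches `k δ` on all first coordinates, so `(k', l') ∈ K wr L` matches `(k, l)`.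
-/

open Equiv

section Closure

variable {Ω : Type*}

def localClosure (m : ℕ) (G : Subgroup (Perm Ω)) : Subgroup (Perm Ω) where
  carrier := {f | ∀ α : Fin m → Ω, ∃ g ∈ G, ∀ i, g (α i) = f (α i)}
  one_mem' _ := ⟨1, G.one_mem, fun _ => rfl⟩
  mul_mem' {f₁ f₂} hf₁ hf₂ α := by
    obtain ⟨g₂, hg₂, hα⟩ := hf₂ α
    obtain ⟨g₁, hg₁, hf₂α⟩ := hf₁ (fun i => f₂ (α i))
    exact ⟨g₁ * g₂, G.mul_mem hg₁ hg₂, fun i => by simp only [Perm.mul_apply, hα, hf₂α]⟩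
  inv_mem' {f} hf α := by
    obtain ⟨g, hg, hgα⟩ := hf (fun i => f⁻¹ (α i))
    exact ⟨g⁻¹, G.inv_mem hg,
      fun i => Perm.inv_eq_iff_eq.2 ((hgα i).trans (f.apply_symm_apply _)).symm⟩

theorem isGreatest_localClosure (m : ℕ) (G : Subgroup (Perm Ω)) :
    IsGreatest {H | SameOrbits m G H} (localClosure m G) := by
  refine ⟨fun α β => ⟨?_, ?_⟩, fun H hH h hh α => (hH α _).2 ⟨h, hh, fun _ => rfl⟩⟩
  · rintro ⟨g, hg, hgα⟩
    exact ⟨g, fun _ => ⟨g, hg, fun _ => rfl⟩, hgα⟩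
  · rintro ⟨h, hh, hhα⟩
    obtain ⟨g, hg, hgα⟩ := hh α
    exact ⟨g, hg, fun i => (hgα i).trans (hhα i)⟩

theorem mem_mClosure_iff {m : ℕ} {G : Subgroup (Perm Ω)} {f : Perm Ω} :
    f ∈ mClosure m G ↔ ∀ α : Fin m → Ω, ∃ g ∈ G, ∀ i, g (α i) = f (α i) := by
  rw [mClosure, (isGreatest_localClosure m G).csSup_eq]
  rfl

theorem exists_mem_apply_eq_pair_of_mem_mClosure {m : ℕ} (hm : 2 ≤ m)
    {G : Subgroup (Perm Ω)} {f : Perm Ω} (hf : f ∈ mClosure m G) (x y : Ω) :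
    ∃ g ∈ G, g x = f x ∧ g y = f y := by
  obtain ⟨g, hg, hgα⟩ := mem_mClosure_iff.1 hf (fun i => if (i : ℕ) = 0 then x else y)
  exact ⟨g, hg, by simpa using hgα ⟨0, by omega⟩, by simpa using hgα ⟨1, by omega⟩⟩

end Closure

section Wreath

variable {Γ Δ : Type*}

def wreathPerm (k : Δ → Perm Γ) (l : Perm Δ) : Perm (Γ × Δ) :=
  (prodComm Γ Δ).trans ((prodShear l k).trans (prodComm Δ Γ))

@[simp]
theorem wreathPerm_apply (k : Δ → Perm Γ) (l : Perm Δ) (γ : Γ) (δ : Δ) :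
    wreathPerm k l (γ, δ) = (k δ γ, l δ) :=
  rfl

/-- The imprimitive action of `K wr L` on `Γ × Δ`. -/
def wreath (K : Subgroup (Perm Γ)) (L : Subgroup (Perm Δ)) : Subgroup (Perm (Γ × Δ)) where
  carrier := {f | ∃ (k : Δ → Perm Γ) (l : Perm Δ),
    (∀ δ, k δ ∈ K) ∧ l ∈ L ∧ ∀ (γ : Γ) (δ : Δ), f (γ, δ) = (k δ γ, l δ)}
  one_mem' := ⟨1, 1, fun _ => K.one_mem, L.one_mem, fun _ _ => rfl⟩
  mul_mem' := by
    rintro f₁ f₂ ⟨k₁, l₁, hk₁, hl₁, hf₁⟩ ⟨k₂, l₂, hk₂, hl₂, hf₂⟩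
    refine ⟨fun δ => k₁ (l₂ δ) * k₂ δ, l₁ * l₂, fun δ => K.mul_mem (hk₁ _) (hk₂ δ),
      L.mul_mem hl₁ hl₂, fun γ δ => ?_⟩
    simp only [Perm.mul_apply, hf₂, hf₁]
  inv_mem' := by
    rintro f ⟨k, l, hk, hl, hf⟩
    refine ⟨fun δ => (k (l⁻¹ δ))⁻¹, l⁻¹, fun δ => K.inv_mem (hk _), L.inv_mem hl, fun γ δ => ?_⟩
    rw [Perm.inv_eq_iff_eq, hf]
    simp

theorem mem_wreath {K : Subgroup (Perm Γ)} {L : Subgroup (Perm Δ)} {f : Perm (Γ × Δ)} :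
    f ∈ wreath K L ↔ ∃ (k : Δ → Perm Γ) (l : Perm Δ),
      (∀ δ, k δ ∈ K) ∧ l ∈ L ∧ ∀ (γ : Γ) (δ : Δ), f (γ, δ) = (k δ γ, l δ) :=
  Iff.rfl

theorem snd_apply_eq_iff_of_mem_wreath {K : Subgroup (Perm Γ)} {L : Subgroup (Perm Δ)}
    {g : Perm (Γ × Δ)} (hg : g ∈ wreath K L) (x y : Γ × Δ) :
    (g x).2 = (g y).2 ↔ x.2 = y.2 := by
  obtain ⟨k, l, -, -, hkl⟩ := hg
  rw [← Prod.mk.eta (p := x), ← Prod.mk.eta (p := y), hkl, hkl]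
  exact l.injective.eq_iff

theorem exists_apply_eq_of_snd_apply_eq_iff [Nonempty Γ] (f : Perm (Γ × Δ))
    (hf : ∀ x y, (f x).2 = (f y).2 ↔ x.2 = y.2) :
    ∃ (k : Δ → Perm Γ) (l : Perm Δ), ∀ (γ : Γ) (δ : Δ), f (γ, δ) = (k δ γ, l δ) := by
  obtain ⟨γ₀⟩ := ‹Nonempty Γ›
  have hfibre : ∀ γ γ' δ, (f (γ, δ)).2 = (f (γ', δ)).2 := fun γ γ' δ => (hf _ _).2 rfl
  have hl : Function.Bijective fun δ => (f (γ₀, δ)).2 := by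
    refine ⟨fun δ δ' h => (hf (γ₀, δ) (γ₀, δ')).1 h, fun δ' => ?_⟩
    obtain ⟨⟨γ, δ⟩, hx⟩ := f.surjective (γ₀, δ')
    exact ⟨δ, by beta_reduce; rw [hfibre γ₀ γ, hx]⟩
  have hk : ∀ δ, Function.Bijective fun γ => (f (γ, δ)).1 := by
    refine fun δ => ⟨fun γ γ' h => (Prod.mk.inj (f.injective (Prod.ext h (hfibre γ γ' δ)))).1,
      fun γ' => ?_⟩
    obtain ⟨⟨γ, δ₁⟩, hx⟩ := f.surjective (γ', (f (γ₀, δ)).2)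
    obtain rfl : δ₁ = δ := (hf (γ, δ₁) (γ₀, δ)).1 (by rw [hx])
    exact ⟨γ, by beta_reduce; rw [hx]⟩
  exact ⟨fun δ => Equiv.ofBijective _ (hk δ), Equiv.ofBijective _ hl,
    fun γ δ => Prod.ext rfl (hfibre γ γ₀ δ)⟩

theorem wreath_mClosure_le (m : ℕ) (K : Subgroup (Perm Γ)) (L : Subgroup (Perm Δ)) :
    wreath (mClosure m K) (mClosure m L) ≤ mClosure m (wreath K L) := by
  rintro f ⟨k, l, hk, hl, hf⟩
  refine mem_mClosure_iff.2 fun α => ?_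
  obtain ⟨l', hl', hl'α⟩ := mem_mClosure_iff.1 hl fun i => (α i).2
  choose k' hk' hk'α using fun δ => mem_mClosure_iff.1 (hk δ) fun i => (α i).1
  refine ⟨wreathPerm k' l', ⟨k', l', hk', hl', fun _ _ => rfl⟩, fun i => ?_⟩
  rw [← Prod.mk.eta (p := α i), wreathPerm_apply, hf, hk'α, hl'α]

theorem mClosure_wreath_le {m : ℕ} (hm : 2 ≤ m) (K : Subgroup (Perm Γ))
    (L : Subgroup (Perm Δ)) :
    mClosure m (wreath K L) ≤ wreath (mClosure m K) (mClosure m L) := by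
  intro f hf
  rcases isEmpty_or_nonempty Γ with hΓ | hΓ
  · exact ⟨1, 1, fun _ => one_mem _, one_mem _, fun γ => isEmptyElim γ⟩
  obtain ⟨γ₀⟩ := id hΓ
  have hfibre (x y : Γ × Δ) : (f x).2 = (f y).2 ↔ x.2 = y.2 := by
    obtain ⟨g, hg, hgx, hgy⟩ := exists_mem_apply_eq_pair_of_mem_mClosure hm hf x y
    rw [← hgx, ← hgy, snd_apply_eq_iff_of_mem_wreath hg]
  obtain ⟨k, l, hkl⟩ := exists_apply_eq_of_snd_apply_eq_iff f hfibre
  refine ⟨k, l, fun δ => mem_mClosure_iff.2 fun β => ?_, mem_mClosure_iff.2 fun β => ?_, hkl⟩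
  · obtain ⟨g, ⟨k', l', hk', -, hg⟩, hgβ⟩ := mem_mClosure_iff.1 hf fun i => (β i, δ)
    refine ⟨k' δ, hk' δ, fun i => ?_⟩
    simpa only [hg, hkl] using congrArg Prod.fst (hgβ i)
  · obtain ⟨g, ⟨k', l', -, hl', hg⟩, hgβ⟩ := mem_mClosure_iff.1 hf fun i => (γ₀, β i)
    refine ⟨l', hl', fun i => ?_⟩
    simpa only [hg, hkl] using congrArg Prod.snd (hgβ i)

theorem mClosure_wreath {m : ℕ} (hm : 2 ≤ m) (K : Subgroup (Perm Γ)) (L : Subgroup (Perm Δ)) :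
    mClosure m (wreath K L) = wreath (mClosure m K) (mClosure m L) :=
  le_antisymm (mClosure_wreath_le hm K L) (wreath_mClosure_le m K L)

end Wreath

theorem stmt16_general {Γ Δ : Type*} (m : ℕ) (hm : 2 ≤ m)
    (K : Subgroup (Equiv.Perm Γ)) (L : Subgroup (Equiv.Perm Δ))
    (W W' : Subgroup (Equiv.Perm (Γ × Δ)))
    (hW : ∀ f : Equiv.Perm (Γ × Δ), f ∈ W ↔
      ∃ (k : Δ → Equiv.Perm Γ) (l : Equiv.Perm Δ),
        (∀ δ, k δ ∈ K) ∧ l ∈ L ∧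
          ∀ (γ : Γ) (δ : Δ), f (γ, δ) = (k δ γ, l δ))
    (hW' : ∀ f : Equiv.Perm (Γ × Δ), f ∈ W' ↔
      ∃ (k : Δ → Equiv.Perm Γ) (l : Equiv.Perm Δ),
        (∀ δ, k δ ∈ mClosure m K) ∧ l ∈ mClosure m L ∧
          ∀ (γ : Γ) (δ : Δ), f (γ, δ) = (k δ γ, l δ)) :
    mClosure m W = W' := by
  obtain rfl : W = wreath K L := Subgroup.ext fun f => (hW f).trans mem_wreath.symm
  obtain rfl : W' = wreath (mClosure m K) (mClosure m L) :=
    Subgroup.ext fun f => (hW' f).trans mem_wreath.symm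
  exact mClosure_wreath hm K L

/-- For `m ≥ 2`, the `m`-closure of the imprimitive wreath product equals the
imprimitive wreath product of the `m`-closures: `(K wr L)^(m) = K^(m) wr L^(m)`.
Here `W` is `K wr L` and `W'` is `K^(m) wr L^(m)`, both acting imprimitively
on `Γ × Δ` via `(γ, δ) ↦ (k δ γ, l δ)`. -/
theorem stmt16 {Γ Δ : Type*} [Fintype Γ] [Fintype Δ] (m : ℕ) (hm : 2 ≤ m)
    (K : Subgroup (Equiv.Perm Γ)) (L : Subgroup (Equiv.Perm Δ))
    (W W' : Subgroup (Equiv.Perm (Γ × Δ)))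
    (hW : ∀ f : Equiv.Perm (Γ × Δ), f ∈ W ↔
      ∃ (k : Δ → Equiv.Perm Γ) (l : Equiv.Perm Δ),
        (∀ δ, k δ ∈ K) ∧ l ∈ L ∧
          ∀ (γ : Γ) (δ : Δ), f (γ, δ) = (k δ γ, l δ))
    (hW' : ∀ f : Equiv.Perm (Γ × Δ), f ∈ W' ↔
      ∃ (k : Δ → Equiv.Perm Γ) (l : Equiv.Perm Δ),
        (∀ δ, k δ ∈ mClosure m K) ∧ l ∈ mClosure m L ∧
          ∀ (γ : Γ) (δ : Δ), f (γ, δ) = (k δ γ, l δ)) :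
    mClosure m W = W' :=
  stmt16_general m hm K L W W' hW hW'
end
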